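/- Let G be a finite symmetric graph, λ an eigenvalue of the normalized Laplacian with m-dimensional eigenspace and orthonormal basis {u₁,…,u_m}. Then the function f₃(x,y) := Σ_{α=1}^m u_α(x)(u_α(y) − u_α(x)) defined on adjacent pairs x ∼ y is constant, with value −λm/(2#E). -/

import Mathlib

open Finset Real

/-- Normalized Laplace operator of a `d`-regular graph: `Δu(x) = (1/d)·Σ_{y∼x}(u y − u x)`. -/
noncomputable def nlap {V : Type*} [Fintype V] (G : SimpleGraph V) [DecidableRel G.Adj] (d : ℕ)
    (u : V → ℝ) (x : V) : ℝ :=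
  (1 / (d : ℝ)) * ∑ y ∈ G.neighborFinset x, (u y - u x)

/-- `l` is an eigenvalue of the normalized Laplacian: `Δu + l·u = 0` for some `u ≠ 0`. -/
def isEig {V : Type*} [Fintype V] (G : SimpleGraph V) [DecidableRel G.Adj] (d : ℕ)
    (l : ℝ) : Prop :=
  ∃ u : V → ℝ, u ≠ 0 ∧ ∀ x, nlap G d u x + l * u x = 0

/-!
The kernel `K x y = Σ_α u_α x u_α y` of an orthonormal basis of an eigenspace `E` is the
reproducing kernel of `E`: for `v ∈ E`, `⟨K x, v⟩ = v x`, and `K x` is the only element of `E`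
with this property. Graph automorphisms preserve `E` and the inner product, so
`K (γ x) (γ y) = K x y`. Since `f₃ x y = K x y - K x x` and the group acts transitively on
oriented edges, `f₃` is constant on the `2 #E` oriented edges, and its sum over them is
`Σ_α ⟨u_α, Δ u_α⟩ = -λ m`.
-/

open Submodule

section ReproducingKernel

variable {V ι : Type*}

theorem comp_mem_span_range {u : ι → V → ℝ} {f : V → V}
    (hf : ∀ i, u i ∘ f ∈ span ℝ (Set.range u)) {v : V → ℝ} (hv : v ∈ span ℝ (Set.range u)) :
    v ∘ f ∈ span ℝ (Set.range u) := by
  have : span ℝ (Set.range u) ≤ (span ℝ (Set.range u)).comap (LinearMap.funLeft ℝ ℝ f) :=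
    span_le.mpr <| Set.range_subset_iff.mpr hf
  exact this hv

variable [Fintype ι]

def reproducingKernel (u : ι → V → ℝ) (x y : V) : ℝ := ∑ i, u i x * u i y

variable {u : ι → V → ℝ}

theorem reproducingKernel_mem_span (x : V) :
    reproducingKernel u x ∈ span ℝ (Set.range u) := by
  have : reproducingKernel u x = ∑ i, u i x • u i := by
    ext y
    simp [reproducingKernel, Finset.sum_apply]
  rw [this]
  exact sum_mem fun i _ => smul_mem _ _ (subset_span ⟨i, rfl⟩)

variable [Fintype V] [DecidableEq ι] {c : ℝ}

theorem reproducingKernel_inner_eq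
    (horth : ∀ i j, c * ∑ x, u i x * u j x = if i = j then 1 else 0)
    {v : V → ℝ} (hv : v ∈ span ℝ (Set.range u)) (x : V) :
    c * ∑ y, reproducingKernel u x y * v y = v x := by
  induction hv using span_induction with
  | mem v hv =>
    obtain ⟨j, rfl⟩ := hv
    calc c * ∑ y, reproducingKernel u x y * u j y
        = ∑ i, u i x * (c * ∑ y, u i y * u j y) := by
          simp only [reproducingKernel, Finset.sum_mul, Finset.mul_sum]
          rw [Finset.sum_comm]
          exact sum_congr rfl fun _ _ => sum_congr rfl fun _ _ => by ring
      _ = u j x := by simp [horth]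
  | zero => simp
  | add v w _ _ hv hw =>
    simp only [Pi.add_apply, mul_add, Finset.sum_add_distrib]
    rw [hv, hw]
  | smul a v _ hv =>
    simp only [Pi.smul_apply, smul_eq_mul, ← hv, Finset.mul_sum]
    exact sum_congr rfl fun _ _ => by ring

theorem reproducingKernel_apply_perm (hc : c ≠ 0)
    (horth : ∀ i j, c * ∑ x, u i x * u j x = if i = j then 1 else 0) (σ : Equiv.Perm V)
    (hσ : ∀ i, u i ∘ σ ∈ span ℝ (Set.range u))
    (hσ_symm : ∀ i, u i ∘ σ.symm ∈ span ℝ (Set.range u)) (x y : V) :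
    reproducingKernel u (σ x) (σ y) = reproducingKernel u x y := by
  set w : V → ℝ := fun y => reproducingKernel u (σ x) (σ y) - reproducingKernel u x y
  have hw : w ∈ span ℝ (Set.range u) :=
    sub_mem (comp_mem_span_range hσ (reproducingKernel_mem_span _))
      (reproducingKernel_mem_span _)
  have hw_perp : ∀ v ∈ span ℝ (Set.range u), c * ∑ y, w y * v y = 0 := by
    intro v hv
    have hσK : c * ∑ y, reproducingKernel u (σ x) (σ y) * v y = v x := by
      rw [← Equiv.sum_comp σ.symm]
      simpa using reproducingKernel_inner_eq horth (comp_mem_span_range hσ_symm hv) (σ x)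
    simp only [w, sub_mul, Finset.sum_sub_distrib, mul_sub, hσK,
      reproducingKernel_inner_eq horth hv, sub_self]
  have hww : ∑ y, w y * w y = 0 := (mul_eq_zero.mp (hw_perp w hw)).resolve_left hc
  exact sub_eq_zero.mp ((sum_mul_self_eq_zero_iff _ _).mp hww y (mem_univ y))

end ReproducingKernel

section GraphLaplacian

variable {V : Type*} [Fintype V] {G : SimpleGraph V} [DecidableRel G.Adj]

theorem SimpleGraph.Iso.neighborFinset_apply_eq_map (γ : G ≃g G) (x : V) :
    G.neighborFinset (γ x) = (G.neighborFinset x).map γ.toEquiv.toEmbedding := by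
  ext z
  simp only [mem_map, SimpleGraph.mem_neighborFinset, Equiv.coe_toEmbedding]
  constructor
  · intro h
    exact ⟨γ.symm z, by simpa using γ.symm.map_adj_iff.mpr h, by simp⟩
  · rintro ⟨a, ha, rfl⟩
    exact γ.map_adj_iff.mpr ha

theorem nlap_comp_iso (d : ℕ) (γ : G ≃g G) (v : V → ℝ) (x : V) :
    nlap G d (v ∘ γ) x = nlap G d v (γ x) := by
  simp [nlap, SimpleGraph.Iso.neighborFinset_apply_eq_map γ x, sum_map]

theorem sum_neighborFinset_sub_eq_nlap {d : ℕ} (hd : (d : ℝ) ≠ 0) (v : V → ℝ) (x : V) :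
    ∑ y ∈ G.neighborFinset x, (v y - v x) = d * nlap G d v x := by
  rw [nlap, ← mul_assoc, mul_one_div_cancel hd, one_mul]

theorem sum_sum_neighborFinset_of_orthonormal_eigenfunctions {ι : Type*} [Fintype ι]
    [DecidableEq ι] {d : ℕ} (hd : (d : ℝ) ≠ 0) {l : ℝ} {u : ι → V → ℝ}
    (heig : ∀ i z, nlap G d (u i) z + l * u i z = 0)
    (horth : ∀ i j, (d : ℝ) * ∑ x, u i x * u j x = if i = j then 1 else 0) :
    ∑ x, ∑ y ∈ G.neighborFinset x, ∑ i, u i x * (u i y - u i x) = -(l * Fintype.card ι) := by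
  have hvertex : ∀ i x, ∑ y ∈ G.neighborFinset x, u i x * (u i y - u i x)
      = -l * (d * (u i x * u i x)) := by
    intro i x
    rw [← Finset.mul_sum, sum_neighborFinset_sub_eq_nlap hd,
      eq_neg_of_add_eq_zero_left (heig i x)]
    ring
  calc ∑ x, ∑ y ∈ G.neighborFinset x, ∑ i, u i x * (u i y - u i x)
      = ∑ i, -l * (d * ∑ x, u i x * u i x) := by
        simp only [Finset.sum_comm (s := G.neighborFinset _), hvertex, Finset.mul_sum]
        exact Finset.sum_comm
    _ = -(l * Fintype.card ι) := by simp [horth, mul_comm]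

theorem sum_sum_neighborFinset_of_adj_eq [DecidableEq V] {f : V → V → ℝ} {c : ℝ}
    (hf : ∀ x y, G.Adj x y → f x y = c) :
    ∑ x, ∑ y ∈ G.neighborFinset x, f x y = 2 * #G.edgeFinset * c := by
  have : ∀ x, ∑ y ∈ G.neighborFinset x, f x y = G.degree x * c := fun x => by
    rw [sum_congr rfl fun y hy => hf x y ((G.mem_neighborFinset x y).mp hy), sum_const,
      G.card_neighborFinset_eq_degree, nsmul_eq_mul]
  rw [sum_congr rfl fun x _ => this x, ← Finset.sum_mul]
  exact_mod_cast congrArg (fun n : ℕ => (n : ℝ) * c) G.sum_degrees_eq_twice_card_edges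

end GraphLaplacian

theorem stmt_9_general {V : Type*} [Fintype V] [DecidableEq V] (G : SimpleGraph V)
    [DecidableRel G.Adj] (d m : ℕ) (hd : 0 < d)
    (hsym : ∀ ⦃x y x' y' : V⦄, G.Adj x y → G.Adj x' y' →
      ∃ γ : G ≃g G, γ x = x' ∧ γ y = y')
    (l : ℝ)
    (u : Fin m → V → ℝ)
    (hmem : ∀ α, ∀ z, nlap G d (u α) z + l * u α z = 0)
    (hspan : ∀ v : V → ℝ, (∀ z, nlap G d v z + l * v z = 0) →
      v ∈ Submodule.span ℝ (Set.range u))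
    (horth : ∀ α β, (d : ℝ) * ∑ x, u α x * u β x = if α = β then 1 else 0) :
    ∀ x y : V, G.Adj x y →
      ∑ α, u α x * (u α y - u α x) = -(l * m) / (2 * G.edgeFinset.card) := by
  intro x y hxy
  have hd' : (d : ℝ) ≠ 0 := Nat.cast_ne_zero.mpr hd.ne'
  have hcomp : ∀ (γ : G ≃g G) α, u α ∘ γ ∈ span ℝ (Set.range u) := fun γ α =>
    hspan _ fun z => by rw [nlap_comp_iso]; exact hmem α (γ z)
  have hK : ∀ (γ : G ≃g G) a b,
      reproducingKernel u (γ a) (γ b) = reproducingKernel u a b := fun γ =>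
    reproducingKernel_apply_perm hd' horth γ.toEquiv (hcomp γ) (hcomp γ.symm)
  have hf₃ : ∀ a b, ∑ α, u α a * (u α b - u α a)
      = reproducingKernel u a b - reproducingKernel u a a := fun a b => by
    simp only [reproducingKernel, mul_sub, Finset.sum_sub_distrib]
  have hconst : ∀ a b, G.Adj a b →
      ∑ α, u α a * (u α b - u α a) = ∑ α, u α x * (u α y - u α x) := by
    intro a b hab
    obtain ⟨γ, rfl, rfl⟩ := hsym hxy hab
    rw [hf₃, hf₃, hK, hK]
  have hedge : (0 : ℝ) < #G.edgeFinset :=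
    Nat.cast_pos.mpr (card_pos.mpr ⟨s(x, y), G.mem_edgeFinset.mpr hxy⟩)
  have hsum := sum_sum_neighborFinset_of_orthonormal_eigenfunctions hd' hmem horth
  rw [Fintype.card_fin, sum_sum_neighborFinset_of_adj_eq hconst] at hsum
  rw [eq_div_iff (by positivity), ← hsum]
  ring

/-- On a finite symmetric `d`-regular graph, for an orthonormal basis `u₁,…,u_m` of the
eigenspace of an eigenvalue `l`, the function `f₃(x,y) = Σ_α u_α(x)(u_α(y) − u_α(x))` on
adjacent pairs is constant with value `−l·m/(2·#E)`. -/
theorem stmt_9 {V : Type*} [Fintype V] [DecidableEq V] (G : SimpleGraph V)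
    [DecidableRel G.Adj] (d m : ℕ) (hd : 0 < d) (hreg : ∀ x, G.degree x = d)
    (hsym : ∀ ⦃x y x' y' : V⦄, G.Adj x y → G.Adj x' y' →
      ∃ γ : G ≃g G, γ x = x' ∧ γ y = y')
    (l : ℝ) (hl : isEig G d l)
    (u : Fin m → V → ℝ)
    (hmem : ∀ α, ∀ z, nlap G d (u α) z + l * u α z = 0)
    (hspan : ∀ v : V → ℝ, (∀ z, nlap G d v z + l * v z = 0) →
      v ∈ Submodule.span ℝ (Set.range u))
    (horth : ∀ α β, (d : ℝ) * ∑ x, u α x * u β x = if α = β then 1 else 0) :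
    ∀ x y : V, G.Adj x y →
      ∑ α, u α x * (u α y - u α x) = -(l * m) / (2 * G.edgeFinset.card) :=
  stmt_9_general G d m hd hsym l u hmem hspan horth
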